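/- Let (H,α) be a Hom-Hopf algebra, (B,β) a right H-Hom-comodule algebra with coaction ρ(b) = b₍₀₎⊗b₍₁₎, A = B^{coH}, and γ: H → B a convolution invertible right H-comodule map with γ(1) = 1 and convolution inverse γ⁻¹. Then ρ∘γ⁻¹ = (γ⁻¹⊗S)∘τ∘Δ, where τ is the flip; in Sweedler notation, ρ(γ⁻¹(h)) = γ⁻¹(h₂) ⊗ S(h₁). -/

import Mathlib

/-!
Since the structure maps are bijective, `ν(a, b) = β⁻¹(a b)` is an associative unital product
on every Hom-algebra, and `f ⋆ g = ν ∘ (f ⊗ g) ∘ (α⁻¹ ⊗ α⁻¹) ∘ Δ` is an associative unital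
convolution product on `Hom(H, A)` by Hom-coassociativity. The coaction `ρ` is multiplicative
for `ν`, so `ρ ∘ γ⁻¹` is a right convolution inverse of `ρ ∘ γ` in `Hom(H, B ⊗ H)`.
With `ι₁ : B → B ⊗ H`, `ι₂ : H → B ⊗ H` the two inclusions, `ρ ∘ γ = (ι₁ γ ⋆ ι₂) ∘ α` and
`(γ⁻¹ ⊗ S) ∘ τ ∘ Δ = (ι₂ S ⋆ ι₁ γ⁻¹) ∘ α`, and associativity gives
`(ι₂ S ⋆ ι₁ γ⁻¹) ⋆ (ι₁ γ ⋆ ι₂) = ι₂ S ⋆ ι₁ (γ⁻¹ ⋆ γ) ⋆ ι₂ = ι₂ (S ⋆ id) = 1`.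
So `(γ⁻¹ ⊗ S) ∘ τ ∘ Δ` is also a left inverse of `ρ ∘ γ`, hence equals `ρ ∘ γ⁻¹`.
-/

open scoped TensorProduct BigOperators

universe u v

/-- A Hom-Hopf algebra over a field `k`, with a chosen Sweedler-type
decomposition (`Idx`, `T`, `d1`, `d2`) of the comultiplication:
`comul h = ∑ i in T h, d1 h i ⊗ₜ d2 h i`.  The structure map `α` is assumed
bijective (a linear equivalence), as throughout the paper. -/
structure HomHopf (k : Type u) (H : Type v) [Field k] [AddCommGroup H] [Module k H] where
  mul : H →ₗ[k] H →ₗ[k] H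
  one : H
  α : H ≃ₗ[k] H
  comul : H →ₗ[k] H ⊗[k] H
  counit : H →ₗ[k] k
  S : H →ₗ[k] H
  Idx : Type v
  T : H → Finset Idx
  d1 : H → Idx → H
  d2 : H → Idx → H
  repr : ∀ h, comul h = ∑ i ∈ T h, d1 h i ⊗ₜ[k] d2 h i
  α_one : α one = one
  α_mul : ∀ x y, α (mul x y) = mul (α x) (α y)
  one_mul : ∀ x, mul one x = α x
  mul_one : ∀ x, mul x one = α x
  hom_assoc : ∀ x y z, mul (α x) (mul y z) = mul (mul x y) (α z)
  counit_α : ∀ h, counit (α h) = counit h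
  comul_α : ∀ h, comul (α h) = ∑ i ∈ T h, α (d1 h i) ⊗ₜ[k] α (d2 h i)
  counit_left : ∀ h, ∑ i ∈ T h, counit (d1 h i) • d2 h i = α h
  counit_right : ∀ h, ∑ i ∈ T h, counit (d2 h i) • d1 h i = α h
  hom_coassoc : ∀ h,
    (TensorProduct.assoc k H H H) (∑ i ∈ T h, comul (d1 h i) ⊗ₜ[k] α (d2 h i))
      = ∑ i ∈ T h, α (d1 h i) ⊗ₜ[k] comul (d2 h i)
  counit_one : counit one = 1
  counit_mul : ∀ x y, counit (mul x y) = counit x * counit y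
  comul_one : comul one = one ⊗ₜ[k] one
  comul_mul : ∀ x y, comul (mul x y)
      = ∑ i ∈ T x, ∑ j ∈ T y, mul (d1 x i) (d1 y j) ⊗ₜ[k] mul (d2 x i) (d2 y j)
  S_α : ∀ h, S (α h) = α (S h)
  S_left : ∀ h, ∑ i ∈ T h, mul (S (d1 h i)) (d2 h i) = counit h • one
  S_right : ∀ h, ∑ i ∈ T h, mul (d1 h i) (S (d2 h i)) = counit h • one

/-- A unital Hom-associative algebra with bijective structure map. -/
structure HomAlg (k : Type u) (A : Type v) [Field k] [AddCommGroup A] [Module k A] where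
  mul : A →ₗ[k] A →ₗ[k] A
  one : A
  β : A ≃ₗ[k] A
  β_one : β one = one
  β_mul : ∀ x y, β (mul x y) = mul (β x) (β y)
  one_mul : ∀ x, mul one x = β x
  mul_one : ∀ x, mul x one = β x
  hom_assoc : ∀ x y z, mul (β x) (mul y z) = mul (mul x y) (β z)

section Comod

variable (k : Type u) (H B : Type v) [Field k]
  [AddCommGroup H] [Module k H] [AddCommGroup B] [Module k B]

/-- A right Hom-`H`-comodule algebra `(B,β)` with a chosen Sweedler decomposition
`ρ b = ∑ i in Tc b, r0 b i ⊗ₜ r1 b i` of the coaction. -/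
structure RComodAlg (HH : HomHopf k H) where
  mul : B →ₗ[k] B →ₗ[k] B
  one : B
  β : B ≃ₗ[k] B
  β_one : β one = one
  β_mul : ∀ x y, β (mul x y) = mul (β x) (β y)
  one_mul : ∀ x, mul one x = β x
  mul_one : ∀ x, mul x one = β x
  hom_assoc : ∀ x y z, mul (β x) (mul y z) = mul (mul x y) (β z)
  ρ : B →ₗ[k] B ⊗[k] H
  Jdx : Type v
  Tc : B → Finset Jdx
  r0 : B → Jdx → B
  r1 : B → Jdx → H
  reprρ : ∀ b, ρ b = ∑ i ∈ Tc b, r0 b i ⊗ₜ[k] r1 b i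
  counit_ρ : ∀ b, ∑ i ∈ Tc b, HH.counit (r1 b i) • r0 b i = β b
  ρ_β : ∀ b, ρ (β b) = ∑ i ∈ Tc b, β (r0 b i) ⊗ₜ[k] HH.α (r1 b i)
  ρ_coassoc : ∀ b, (TensorProduct.assoc k B H H)
      (∑ i ∈ Tc b, ρ (r0 b i) ⊗ₜ[k] HH.α (r1 b i))
    = ∑ i ∈ Tc b, β (r0 b i) ⊗ₜ[k] HH.comul (r1 b i)
  ρ_mul : ∀ b b', ρ (mul b b')
    = ∑ i ∈ Tc b, ∑ j ∈ Tc b', mul (r0 b i) (r0 b' j) ⊗ₜ[k] HH.mul (r1 b i) (r1 b' j)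
  ρ_one : ρ one = one ⊗ₜ[k] HH.one

variable {k H B}

/-- `γ` is a convolution invertible (with inverse `γ'`) right `H`-comodule map
`H → B` with `γ(1) = 1`, i.e. the data of a cleft extension `B^{coH} ⊆ B`. -/
def CleftData {HH : HomHopf k H} (BB : RComodAlg k H B HH) (γ γ' : H →ₗ[k] B) : Prop :=
  (∀ h, BB.ρ (γ h) = ∑ i ∈ HH.T h, γ (HH.d1 h i) ⊗ₜ[k] HH.d2 h i) ∧
  (∀ h, γ (HH.α h) = BB.β (γ h)) ∧
  (∀ h, ∑ i ∈ HH.T h, BB.mul (γ (HH.d1 h i)) (γ' (HH.d2 h i)) = HH.counit h • BB.one) ∧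
  (∀ h, ∑ i ∈ HH.T h, BB.mul (γ' (HH.d1 h i)) (γ (HH.d2 h i)) = HH.counit h • BB.one) ∧
  (γ HH.one = BB.one)

end Comod

open TensorProduct

namespace HomAlg

variable {k : Type u} [Field k] {A A' : Type v} [AddCommGroup A] [Module k A]
  [AddCommGroup A'] [Module k A']

def untwist (P : HomAlg k A) : A →ₗ[k] A →ₗ[k] A :=
  P.mul.compr₂ P.β.symm.toLinearMap

variable (P : HomAlg k A) (Q : HomAlg k A')

lemma untwist_apply (a b : A) : P.untwist a b = P.β.symm (P.mul a b) := rfl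

lemma untwist_assoc (a b c : A) :
    P.untwist (P.untwist a b) c = P.untwist a (P.untwist b c) := by
  simp only [untwist_apply]
  congr 1
  apply P.β.injective
  rw [P.β_mul, P.β_mul, LinearEquiv.apply_symm_apply, LinearEquiv.apply_symm_apply,
    P.hom_assoc]

lemma untwist_one_left (a : A) : P.untwist P.one a = a := by
  rw [untwist_apply, P.one_mul, LinearEquiv.symm_apply_apply]

lemma untwist_one_right (a : A) : P.untwist a P.one = a := by
  rw [untwist_apply, P.mul_one, LinearEquiv.symm_apply_apply]

lemma map_untwist {φ : A →ₗ[k] A'} (hmul : ∀ a b, φ (P.mul a b) = Q.mul (φ a) (φ b))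
    (hβ : ∀ a, φ (P.β a) = Q.β (φ a)) (a b : A) :
    φ (P.untwist a b) = Q.untwist (φ a) (φ b) := by
  rw [untwist_apply, untwist_apply, ← hmul]
  apply Q.β.injective
  rw [← hβ, LinearEquiv.apply_symm_apply, LinearEquiv.apply_symm_apply]

def tensor : HomAlg k (A ⊗[k] A') where
  mul := TensorProduct.map₂ P.mul Q.mul
  one := P.one ⊗ₜ Q.one
  β := TensorProduct.congr P.β Q.β
  β_one := by simp [P.β_one, Q.β_one]
  β_mul x y := by
    induction x using TensorProduct.induction_on with
    | zero => simp
    | add x₁ x₂ h₁ h₂ => simp only [map_add, LinearMap.add_apply, h₁, h₂]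
    | tmul a a' =>
      induction y using TensorProduct.induction_on with
      | zero => simp
      | add y₁ y₂ h₁ h₂ => simp only [map_add, h₁, h₂]
      | tmul b b' => simp [map₂_apply_tmul, P.β_mul, Q.β_mul]
  one_mul x := by
    induction x using TensorProduct.induction_on with
    | zero => simp
    | add x₁ x₂ h₁ h₂ => simp only [map_add, h₁, h₂]
    | tmul a a' => simp [map₂_apply_tmul, P.one_mul, Q.one_mul]
  mul_one x := by
    induction x using TensorProduct.induction_on with
    | zero => simp
    | add x₁ x₂ h₁ h₂ => simp only [map_add, LinearMap.add_apply, h₁, h₂]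
    | tmul a a' => simp [map₂_apply_tmul, P.mul_one, Q.mul_one]
  hom_assoc x y z := by
    induction x using TensorProduct.induction_on with
    | zero => simp
    | add x₁ x₂ h₁ h₂ => simp only [map_add, LinearMap.add_apply, h₁, h₂]
    | tmul a a' =>
      induction y using TensorProduct.induction_on with
      | zero => simp
      | add y₁ y₂ h₁ h₂ => simp only [map_add, LinearMap.add_apply, h₁, h₂]
      | tmul b b' =>
        induction z using TensorProduct.induction_on with
        | zero => simp
        | add z₁ z₂ h₁ h₂ => simp only [map_add, h₁, h₂]
        | tmul c c' => simp [map₂_apply_tmul, P.hom_assoc, Q.hom_assoc]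

lemma tensor_mul_tmul (a b : A) (a' b' : A') :
    (P.tensor Q).mul (a ⊗ₜ a') (b ⊗ₜ b') = P.mul a b ⊗ₜ Q.mul a' b' := by
  simp [tensor, map₂_apply_tmul]

lemma tensor_untwist_tmul (a b : A) (a' b' : A') :
    (P.tensor Q).untwist (a ⊗ₜ a') (b ⊗ₜ b') = P.untwist a b ⊗ₜ Q.untwist a' b' := by
  rw [untwist_apply, tensor_mul_tmul]
  exact congr_symm_tmul _ _ _ _

def includeLeft : A →ₗ[k] A ⊗[k] A' := (TensorProduct.mk k A A').flip Q.one

def includeRight : A' →ₗ[k] A ⊗[k] A' := TensorProduct.mk k A A' P.one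

lemma includeLeft_untwist (a b : A) :
    includeLeft Q (P.untwist a b) = (P.tensor Q).untwist (includeLeft Q a) (includeLeft Q b) := by
  simp [includeLeft, tensor_untwist_tmul, untwist_one_left]

lemma includeRight_untwist (a b : A') :
    includeRight P (Q.untwist a b)
      = (P.tensor Q).untwist (includeRight P a) (includeRight P b) := by
  simp [includeRight, tensor_untwist_tmul, untwist_one_left]

lemma untwist_includeLeft_includeRight (a : A) (a' : A') :
    (P.tensor Q).untwist (includeLeft Q a) (includeRight P a') = a ⊗ₜ a' := by
  simp [includeLeft, includeRight, tensor_untwist_tmul, untwist_one_left, untwist_one_right]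

lemma untwist_includeRight_includeLeft (a : A) (a' : A') :
    (P.tensor Q).untwist (includeRight P a') (includeLeft Q a) = a ⊗ₜ a' := by
  simp [includeLeft, includeRight, tensor_untwist_tmul, untwist_one_left, untwist_one_right]

end HomAlg

namespace HomHopf

open HomAlg

variable {k : Type u} [Field k] {H A A' : Type v} [AddCommGroup H] [Module k H]
  [AddCommGroup A] [Module k A] [AddCommGroup A'] [Module k A']

def toHomAlg (HH : HomHopf k H) : HomAlg k H :=
  ⟨HH.mul, HH.one, HH.α, HH.α_one, HH.α_mul, HH.one_mul, HH.mul_one, HH.hom_assoc⟩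

variable (HH : HomHopf k H) (P : HomAlg k A) (Q : HomAlg k A')

def conv (f g : H →ₗ[k] A) : H →ₗ[k] A :=
  lift P.untwist ∘ₗ map (f ∘ₗ HH.α.symm.toLinearMap) (g ∘ₗ HH.α.symm.toLinearMap) ∘ₗ HH.comul

def convOne : H →ₗ[k] A :=
  LinearMap.toSpanSingleton k A P.one ∘ₗ HH.counit

lemma convOne_apply (x : H) : HH.convOne P x = HH.counit x • P.one := rfl

lemma conv_apply_α (f g : H →ₗ[k] A) (x : H) :
    HH.conv P f g (HH.α x) = ∑ i ∈ HH.T x, P.untwist (f (HH.d1 x i)) (g (HH.d2 x i)) := by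
  simp [conv, HH.comul_α]

lemma conv_comp_α (f g : H →ₗ[k] A) :
    HH.conv P (f ∘ₗ HH.α.toLinearMap) (g ∘ₗ HH.α.toLinearMap)
      = HH.conv P f g ∘ₗ HH.α.toLinearMap := by
  ext x
  rw [LinearMap.comp_apply, LinearEquiv.coe_coe, conv_apply_α]
  simp [conv, HH.repr]

lemma convOne_comp_α : HH.convOne P ∘ₗ HH.α.toLinearMap = HH.convOne P := by
  ext x
  simp [convOne_apply, HH.counit_α]

lemma ext_α {f g : H →ₗ[k] A} (h : ∀ x, f (HH.α x) = g (HH.α x)) : f = g := by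
  ext x
  simpa using h (HH.α.symm x)

lemma conv_assoc (f g l : H →ₗ[k] A) :
    HH.conv P (HH.conv P f g) l = HH.conv P f (HH.conv P g l) := by
  set a := HH.α.symm.toLinearMap
  set Φ := lift P.untwist ∘ₗ map (lift P.untwist ∘ₗ map (f ∘ₗ a) (g ∘ₗ a)) (l ∘ₗ a)
  set Ψ := lift P.untwist ∘ₗ map (f ∘ₗ a) (lift P.untwist ∘ₗ map (g ∘ₗ a) (l ∘ₗ a))
  have hassoc : Φ = Ψ ∘ₗ (TensorProduct.assoc k H H H).toLinearMap :=
    TensorProduct.ext_threefold fun x y z => by simp [Φ, Ψ, P.untwist_assoc]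
  refine HH.ext_α fun x => ?_
  have := congrArg Ψ (HH.hom_coassoc x)
  rw [← LinearEquiv.coe_toLinearMap, ← LinearMap.comp_apply, ← hassoc] at this
  rw [conv_apply_α, conv_apply_α]
  simpa [a, Φ, Ψ, conv] using this

lemma convOne_conv (f : H →ₗ[k] A) : HH.conv P (HH.convOne P) f = f := by
  refine HH.ext_α fun x => ?_
  simp only [conv_apply_α, convOne_apply, map_smul, LinearMap.smul_apply, P.untwist_one_left]
  rw [← HH.counit_left x, map_sum]
  simp only [map_smul]

lemma conv_convOne (f : H →ₗ[k] A) : HH.conv P f (HH.convOne P) = f := by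
  refine HH.ext_α fun x => ?_
  simp only [conv_apply_α, convOne_apply, map_smul, P.untwist_one_right]
  rw [← HH.counit_right x, map_sum]
  simp only [map_smul]

lemma eq_of_conv_eq_convOne {f g g' : H →ₗ[k] A} (h : HH.conv P f g = HH.convOne P)
    (h' : HH.conv P g' f = HH.convOne P) : g' = g :=
  calc g' = HH.conv P g' (HH.conv P f g) := by rw [h, conv_convOne]
    _ = HH.conv P (HH.conv P g' f) g := (HH.conv_assoc P g' f g).symm
    _ = g := by rw [h', convOne_conv]

lemma comp_conv {φ : A →ₗ[k] A'} (hφ : ∀ a b, φ (P.untwist a b) = Q.untwist (φ a) (φ b))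
    (f g : H →ₗ[k] A) : φ ∘ₗ HH.conv P f g = HH.conv Q (φ ∘ₗ f) (φ ∘ₗ g) := by
  refine HH.ext_α fun x => ?_
  simp [conv_apply_α, hφ]

lemma comp_convOne {φ : A →ₗ[k] A'} (hφ : φ P.one = Q.one) :
    φ ∘ₗ HH.convOne P = HH.convOne Q := by
  ext x
  simp [convOne_apply, hφ]

lemma conv_eq_convOne {f g : H →ₗ[k] A}
    (h : ∀ x, ∑ i ∈ HH.T x, P.mul (f (HH.d1 x i)) (g (HH.d2 x i)) = HH.counit x • P.one) :
    HH.conv P f g = HH.convOne P := by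
  refine HH.ext_α fun x => ?_
  have hβ : P.β.symm P.one = P.one := by
    rw [LinearEquiv.symm_apply_eq, P.β_one]
  simp only [conv_apply_α, HomAlg.untwist_apply, ← map_sum, h, convOne_apply, HH.counit_α,
    map_smul, hβ]

lemma conv_includeLeft_includeRight_comp_α (f : H →ₗ[k] A) :
    HH.conv (P.tensor HH.toHomAlg) (includeLeft HH.toHomAlg ∘ₗ f) (includeRight P)
        ∘ₗ HH.α.toLinearMap = map f LinearMap.id ∘ₗ HH.comul := by
  ext x
  simp [conv_apply_α, untwist_includeLeft_includeRight, HH.repr]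

lemma conv_includeRight_includeLeft_comp_α (f : H →ₗ[k] A) :
    HH.conv (P.tensor HH.toHomAlg) (includeRight P ∘ₗ HH.S) (includeLeft HH.toHomAlg ∘ₗ f)
        ∘ₗ HH.α.toLinearMap = map f HH.S ∘ₗ (TensorProduct.comm k H H).toLinearMap ∘ₗ HH.comul := by
  ext x
  simp [conv_apply_α, untwist_includeRight_includeLeft, HH.repr]

lemma conv_antipode_id : HH.conv HH.toHomAlg HH.S LinearMap.id = HH.convOne HH.toHomAlg :=
  HH.conv_eq_convOne _ HH.S_left

lemma conv_includeRight_includeLeft_conv_eq_convOne {f f' : H →ₗ[k] A}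
    (hf : HH.conv P f' f = HH.convOne P) :
    HH.conv (P.tensor HH.toHomAlg)
        (HH.conv (P.tensor HH.toHomAlg) (includeRight P ∘ₗ HH.S) (includeLeft HH.toHomAlg ∘ₗ f'))
        (HH.conv (P.tensor HH.toHomAlg) (includeLeft HH.toHomAlg ∘ₗ f) (includeRight P))
      = HH.convOne (P.tensor HH.toHomAlg) := by
  have hι₁ := HH.comp_conv P (P.tensor HH.toHomAlg) (includeLeft_untwist P HH.toHomAlg)
  have hι₂ : HH.conv (P.tensor HH.toHomAlg) (includeRight P ∘ₗ HH.S) (includeRight P)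
      = includeRight P ∘ₗ HH.conv HH.toHomAlg HH.S LinearMap.id := by
    rw [HH.comp_conv _ _ (includeRight_untwist P HH.toHomAlg), LinearMap.comp_id]
  rw [conv_assoc, ← conv_assoc _ _ (includeLeft _ ∘ₗ f'), ← hι₁, hf,
    HH.comp_convOne P (P.tensor HH.toHomAlg) rfl, convOne_conv, hι₂, conv_antipode_id,
    HH.comp_convOne HH.toHomAlg (P.tensor HH.toHomAlg) rfl]

end HomHopf

namespace RComodAlg

open HomAlg

variable {k : Type u} [Field k] {H B : Type v} [AddCommGroup H] [Module k H]
  [AddCommGroup B] [Module k B] {HH : HomHopf k H} (BB : RComodAlg k H B HH)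

def toHomAlg : HomAlg k B :=
  ⟨BB.mul, BB.one, BB.β, BB.β_one, BB.β_mul, BB.one_mul, BB.mul_one, BB.hom_assoc⟩

lemma ρ_untwist (b b' : B) :
    BB.ρ (BB.toHomAlg.untwist b b')
      = (BB.toHomAlg.tensor HH.toHomAlg).untwist (BB.ρ b) (BB.ρ b') := by
  refine map_untwist _ _ (fun b b' => ?_) (fun b => ?_) b b'
  · change BB.ρ (BB.mul b b') = _
    rw [BB.ρ_mul, BB.reprρ b, BB.reprρ b']
    simp only [map_sum, LinearMap.sum_apply, tensor_mul_tmul]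
    exact Finset.sum_comm
  · change BB.ρ (BB.β b) = _
    rw [BB.ρ_β, BB.reprρ b, map_sum]
    rfl

lemma ρ_comp_eq_map_comm_comul {γ γ' : H →ₗ[k] B}
    (hcomod : BB.ρ ∘ₗ γ = map γ LinearMap.id ∘ₗ HH.comul)
    (hγγ' : HH.conv BB.toHomAlg γ γ' = HH.convOne BB.toHomAlg)
    (hγ'γ : HH.conv BB.toHomAlg γ' γ = HH.convOne BB.toHomAlg) :
    BB.ρ ∘ₗ γ' = map γ' HH.S ∘ₗ (TensorProduct.comm k H H).toLinearMap ∘ₗ HH.comul := by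
  have hright : HH.conv (BB.toHomAlg.tensor HH.toHomAlg) (BB.ρ ∘ₗ γ) (BB.ρ ∘ₗ γ')
      = HH.convOne (BB.toHomAlg.tensor HH.toHomAlg) := by
    rw [← HH.comp_conv _ _ BB.ρ_untwist, hγγ',
      HH.comp_convOne BB.toHomAlg (BB.toHomAlg.tensor HH.toHomAlg) BB.ρ_one]
  have hleft : HH.conv (BB.toHomAlg.tensor HH.toHomAlg)
      (map γ' HH.S ∘ₗ (TensorProduct.comm k H H).toLinearMap ∘ₗ HH.comul) (BB.ρ ∘ₗ γ)
      = HH.convOne (BB.toHomAlg.tensor HH.toHomAlg) := by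
    rw [hcomod, ← HH.conv_includeRight_includeLeft_comp_α BB.toHomAlg γ',
      ← HH.conv_includeLeft_includeRight_comp_α BB.toHomAlg γ, HH.conv_comp_α,
      HH.conv_includeRight_includeLeft_conv_eq_convOne _ hγ'γ, HH.convOne_comp_α]
  exact (HH.eq_of_conv_eq_convOne _ hright hleft).symm

end RComodAlg

theorem cleft_inverse_coaction {k : Type u} {H B : Type v} [Field k]
    [AddCommGroup H] [Module k H] [AddCommGroup B] [Module k B]
    (HH : HomHopf k H) (BB : RComodAlg k H B HH) (γ γ' : H →ₗ[k] B)
    (hγ : CleftData BB γ γ') :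
    ∀ h, BB.ρ (γ' h) = ∑ i ∈ HH.T h, γ' (HH.d2 h i) ⊗ₜ[k] HH.S (HH.d1 h i) := by
  obtain ⟨hcomod, -, hγγ', hγ'γ, -⟩ := hγ
  have hρ := BB.ρ_comp_eq_map_comm_comul (γ := γ) (γ' := γ')
    (LinearMap.ext fun h => by simp [hcomod, HH.repr])
    (HH.conv_eq_convOne _ hγγ') (HH.conv_eq_convOne _ hγ'γ)
  intro h
  simpa [HH.repr] using LinearMap.congr_fun hρ h
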